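/- A two-fermionic-mode density matrix ρ that is diagonal in the Fock (computational) basis {|00⟩, |01⟩, |10⟩, |11⟩} is separable with respect to all observables: there exist product states whose convex combination reproduces Tr(O_A O_B ρ) for all operators O_A on mode 1 and O_B on mode 2. Conversely, if ρ(t) = ρ(0) + t L(ρ(0)) + O(t²) with ⟨10|ρ(t)|01⟩ = Jt + O(t²) for J ≠ 0, then ρ(t) is not within O(t²) trace distance of any diagonal matrix, hence not approximately separable. -/

import Mathlib

open Matrix
open scoped ComplexOrder Kronecker

/-- Trace norm `‖A‖₁ = Tr √(A†A)`. -/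
noncomputable def traceNorm {n : Type*} [Fintype n] [DecidableEq n]
    (A : Matrix n n ℂ) : ℝ :=
  ((Matrix.posSemidef_conjTranspose_mul_self A).1.eigenvectorUnitary.1 *
    diagonal (((↑) : ℝ → ℂ) ∘ Real.sqrt ∘ (Matrix.posSemidef_conjTranspose_mul_self A).1.eigenvalues) *
    (star (Matrix.posSemidef_conjTranspose_mul_self A).1.eigenvectorUnitary :
      Matrix n n ℂ)).trace.re

/-- Pauli `Z` matrix. -/
def Zm : Matrix (Fin 2) (Fin 2) ℂ := !![1, 0; 0, -1]

/-- Matrix unit `E a b`. -/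
def Em (a b : Fin 2) : Matrix (Fin 2) (Fin 2) ℂ := Matrix.single a b 1

/-- Observables supported on fermionic mode 1 (the algebra generated by `a₁, a₁†`
in the Jordan–Wigner representation): matrices of the form `M ⊗ 1`. -/
def ModeAObs : Set (Matrix (Fin 2 × Fin 2) (Fin 2 × Fin 2) ℂ) :=
  {X | ∃ M : Matrix (Fin 2) (Fin 2) ℂ, X = M ⊗ₖ (1 : Matrix (Fin 2) (Fin 2) ℂ)}

/-- Observables supported on fermionic mode 2 (the algebra generated by `a₂, a₂†`
in the Jordan–Wigner representation): spanned by `1 ⊗ E₀₀`, `1 ⊗ E₁₁`,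
`Z ⊗ E₀₁`, `Z ⊗ E₁₀`. -/
def ModeBObs : Set (Matrix (Fin 2 × Fin 2) (Fin 2 × Fin 2) ℂ) :=
  {X | ∃ α β γ δ : ℂ,
    X = α • ((1 : Matrix (Fin 2) (Fin 2) ℂ) ⊗ₖ Em 0 0)
      + β • ((1 : Matrix (Fin 2) (Fin 2) ℂ) ⊗ₖ Em 1 1)
      + γ • (Zm ⊗ₖ Em 0 1) + δ • (Zm ⊗ₖ Em 1 0)}

/-- Separability of a two-fermionic-mode state with respect to all observables:
a convex combination of product states reproduces `Tr(O_A O_B ρ)` for every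
observable `O_A` on mode 1 and `O_B` on mode 2. -/
def SepAllObs (ρ : Matrix (Fin 2 × Fin 2) (Fin 2 × Fin 2) ℂ) : Prop :=
  ∃ (r : ℕ) (w : Fin r → ℝ)
    (ρA ρB : Fin r → Matrix (Fin 2 × Fin 2) (Fin 2 × Fin 2) ℂ),
    (∀ i, 0 ≤ w i) ∧ (∑ i, w i = 1) ∧
    (∀ i, (ρA i).PosSemidef ∧ (ρA i).trace = 1 ∧
          (ρB i).PosSemidef ∧ (ρB i).trace = 1) ∧
    ∀ OA ∈ ModeAObs, ∀ OB ∈ ModeBObs,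
      (OA * OB * ρ).trace = ∑ i, (w i : ℂ) * (OA * ρA i).trace * (OB * ρB i).trace

section Aux

lemma psd_diag_re {n : Type*} [Fintype n] [DecidableEq n] {S : Matrix n n ℂ}
    (hS : S.PosSemidef) (k : n) : 0 ≤ (S k k).re := by
  have h := hS.re_dotProduct_nonneg (Pi.single k 1)
  simpa [dotProduct, mulVec, Pi.single_apply, Finset.sum_ite_eq'] using h

lemma psd_diag_im {n : Type*} [Fintype n] [DecidableEq n] {S : Matrix n n ℂ}
    (hS : S.PosSemidef) (k : n) : (S k k).im = 0 := by
  have := congrFun (congrFun hS.isHermitian.symm k) k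
  simp only [conjTranspose_apply] at this
  have h2 := congrArg Complex.im this
  simp at h2; linarith

lemma psd_quad {n : Type*} [Fintype n] [DecidableEq n] {S : Matrix n n ℂ} (hS : S.PosSemidef)
    (k j : n) (c : ℂ) :
    0 ≤ Complex.normSq c * (S k k).re + 2 * (c * S k j).re + (S j j).re := by
  have h := hS.re_dotProduct_nonneg (Pi.single k (starRingEnd ℂ c) + Pi.single j 1)
  have hherm : S j k = star (S k j) := by
    have := congrFun (congrFun hS.isHermitian.symm j) k
    simpa [conjTranspose_apply] using this
  simp only [dotProduct, mulVec, Pi.add_apply, Pi.single_apply, star_add, Pi.star_apply,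
    apply_ite star, star_zero, ite_mul, zero_mul, mul_one, star_one, one_mul, add_mul, mul_add,
    mul_ite, mul_zero, Finset.sum_add_distrib,
    Finset.sum_ite_eq', Finset.mem_univ, if_true] at h
  rw [hherm] at h
  have hkkim : (S k k).im = 0 := psd_diag_im hS k
  have hre := h
  simp only [RCLike.re_to_complex, map_add, RCLike.star_def, RingHom.coe_coe,
    starRingEnd_self_apply, Complex.add_re, Complex.mul_re, Complex.mul_im, hkkim,
    Complex.conj_re, Complex.conj_im, Complex.normSq_apply] at hre ⊢
  ring_nf at hre ⊢
  nlinarith [hre]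

/-- Off-diagonal entry squared bounded by product of diagonal entries, for PSD matrices. -/
lemma psd_entry_sq_le {n : Type*} [Fintype n] [DecidableEq n] {S : Matrix n n ℂ}
    (hS : S.PosSemidef) (k j : n) :
    Complex.normSq (S k j) ≤ (S k k).re * (S j j).re := by
  rcases eq_or_ne (S k j) 0 with h0 | h0
  · simp only [h0, Complex.normSq_zero]
    exact mul_nonneg (psd_diag_re hS k) (psd_diag_re hS j)
  by_cases ha : (S k k).re = 0
  · exfalso
    have hb := psd_diag_re hS j
    have hq := psd_quad hS k j (-(((S j j).re + 1) / Complex.normSq (S k j)) * (starRingEnd ℂ) (S k j))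
    have hns : 0 < Complex.normSq (S k j) := Complex.normSq_pos.mpr h0
    rw [ha] at hq
    have hc : ((-(((S j j).re + 1) / Complex.normSq (S k j)) * (starRingEnd ℂ) (S k j)) * S k j).re
        = -((S j j).re + 1) := by
      have : (starRingEnd ℂ) (S k j) * S k j = (Complex.normSq (S k j) : ℂ) := by
        rw [mul_comm]; exact Complex.mul_conj _
      rw [mul_assoc, this]
      field_simp
      simp
    rw [hc] at hq
    nlinarith
  · have ha' : 0 < (S k k).re := lt_of_le_of_ne (psd_diag_re hS k) (Ne.symm ha)
    have hq := psd_quad hS k j (-(1 / (S k k).re) * (starRingEnd ℂ) (S k j))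
    have hc : ((-(1 / (S k k).re) * (starRingEnd ℂ) (S k j)) * S k j).re
        = -(Complex.normSq (S k j) / (S k k).re) := by
      have : (starRingEnd ℂ) (S k j) * S k j = (Complex.normSq (S k j) : ℂ) := by
        rw [mul_comm]; exact Complex.mul_conj _
      rw [mul_assoc, this]
      field_simp
      simp only [Complex.div_re, Complex.neg_re, Complex.neg_im, Complex.ofReal_re, Complex.ofReal_im,
        Complex.normSq_ofReal]
      field_simp
      ring
    rw [hc] at hq
    have hnsq : Complex.normSq (-(1 / (S k k).re) * (starRingEnd ℂ) (S k j))
        = Complex.normSq (S k j) / (S k k).re ^ 2 := by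
      have : (-(1 / ((S k k).re : ℂ))) = ((-(1 / (S k k).re) : ℝ) : ℂ) := by push_cast; ring
      rw [Complex.normSq_mul, Complex.normSq_conj, this, Complex.normSq_ofReal]
      field_simp
    rw [hnsq] at hq
    have h2 : Complex.normSq (S k j) / (S k k).re ^ 2 * (S k k).re
        = Complex.normSq (S k j) / (S k k).re := by
      field_simp
    rw [h2] at hq
    have := (div_le_iff₀ ha').mp (by linarith : Complex.normSq (S k j) / (S k k).re ≤ (S j j).re)
    linarith [this]

/-- Every entry of a matrix is bounded in norm by the trace norm. -/
lemma traceNorm_entry_le {n : Type*} [Fintype n] [DecidableEq n]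
    (A : Matrix n n ℂ) (i j : n) : ‖A i j‖ ≤ traceNorm A := by
  set hP := Matrix.posSemidef_conjTranspose_mul_self A with hPdef
  set S := (hP.1.eigenvectorUnitary.1 * diagonal (((↑) : ℝ → ℂ) ∘ Real.sqrt ∘ hP.1.eigenvalues) *
    (star hP.1.eigenvectorUnitary : Matrix n n ℂ)) with hSdef
  have hS : S.PosSemidef := by
    have h := (Matrix.PosSemidef.diagonal (d := ((↑) : ℝ → ℂ) ∘ Real.sqrt ∘ hP.1.eigenvalues)
      (fun i => by simp [Real.sqrt_nonneg])).mul_mul_conjTranspose_same hP.1.eigenvectorUnitary.1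
    simpa [hSdef, Matrix.star_eq_conjTranspose] using h
  have hSS : S * S = Aᴴ * A := by
    have hU : (star hP.1.eigenvectorUnitary : Matrix n n ℂ) * hP.1.eigenvectorUnitary.1 = 1 :=
      hP.1.eigenvectorUnitary.2.1
    conv_rhs => rw [hP.1.spectral_theorem, Unitary.conjStarAlgAut_apply]
    rw [hSdef, show ∀ U D V : Matrix n n ℂ, U * D * V * (U * D * V) = U * (D * (V * U) * D) * V by
      intro U D V; simp only [mul_assoc], hU, mul_one, diagonal_mul_diagonal]
    refine congrArg (fun D => _ * D * _) (congrArg diagonal (funext fun i => ?_))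
    simp only [Function.comp_apply, ← Complex.ofReal_mul, Real.mul_self_sqrt (hP.eigenvalues_nonneg i)]
    rfl
  have hP1 : ((Aᴴ * A) j j).re = ∑ k, Complex.normSq (A k j) := by
    simp [Matrix.mul_apply, conjTranspose_apply, Complex.re_sum, ← Complex.normSq_eq_conj_mul_self]
  have hge : Complex.normSq (A i j) ≤ ((Aᴴ * A) j j).re := by
    rw [hP1]
    exact Finset.single_le_sum (f := fun k => Complex.normSq (A k j))
      (fun k _ => Complex.normSq_nonneg _) (Finset.mem_univ i)
  have hP2 : ((Aᴴ * A) j j).re = ∑ k, Complex.normSq (S k j) := by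
    rw [← hSS]
    have : ∀ k, S j k = star (S k j) := fun k => by
      have := congrFun (congrFun hS.isHermitian.symm j) k
      simpa [conjTranspose_apply] using this
    simp [Matrix.mul_apply, this, Complex.re_sum, ← Complex.normSq_eq_conj_mul_self, mul_comm,
      Complex.normSq_apply]
  set T := traceNorm A with hT
  have hTsum : T = ∑ k, (S k k).re := by
    simp [hT, traceNorm, Matrix.trace, Matrix.diag, Complex.re_sum, hSdef, hPdef]
  have hT0 : 0 ≤ T := hTsum ▸ Finset.sum_nonneg (fun k _ => psd_diag_re hS k)
  have hjj : (S j j).re ≤ T := hTsum ▸ Finset.single_le_sum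
      (f := fun k => (S k k).re) (fun k _ => psd_diag_re hS k) (Finset.mem_univ j)
  have hsum : ∑ k, Complex.normSq (S k j) ≤ T * (S j j).re := by
    rw [hTsum, Finset.sum_mul]
    exact Finset.sum_le_sum (fun k _ => psd_entry_sq_le hS k j)
  have hfin : Complex.normSq (A i j) ≤ T ^ 2 := by
    have h1 : Complex.normSq (A i j) ≤ T * (S j j).re := by
      rw [hP2] at hge; linarith
    nlinarith [psd_diag_re hS j]
  have hnq : ‖A i j‖ ^ 2 = Complex.normSq (A i j) := by
    rw [Complex.sq_norm]
  nlinarith [norm_nonneg (A i j)]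

lemma proj_psd (a : Fin 2 × Fin 2) :
    (Matrix.single a a (1:ℂ)).PosSemidef := by
  have : Matrix.single a a (1:ℂ) = Matrix.diagonal (Pi.single a 1) := by
    ext i j
    simp [Matrix.single, Matrix.diagonal, Pi.single_apply]
    aesop
  rw [this]
  exact Matrix.PosSemidef.diagonal (by
    intro i
    by_cases h : i = a <;> simp [Pi.single_apply, h])

lemma proj_trace (a : Fin 2 × Fin 2) :
    (Matrix.single a a (1:ℂ)).trace = 1 := by
  simp [Matrix.trace, Matrix.diag, Matrix.single]

lemma key_identity (d : (Fin 2 × Fin 2) → ℂ) (M : Matrix (Fin 2) (Fin 2) ℂ) (α β γ δ : ℂ) :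
    ((M ⊗ₖ (1 : Matrix (Fin 2) (Fin 2) ℂ))
      * (α • ((1 : Matrix (Fin 2) (Fin 2) ℂ) ⊗ₖ Em 0 0)
        + β • ((1 : Matrix (Fin 2) (Fin 2) ℂ) ⊗ₖ Em 1 1)
        + γ • (Zm ⊗ₖ Em 0 1) + δ • (Zm ⊗ₖ Em 1 0))
      * Matrix.diagonal d).trace
    = ∑ x : Fin 2 × Fin 2, d x *
        ((M ⊗ₖ (1 : Matrix (Fin 2) (Fin 2) ℂ)) * Matrix.single x x 1).trace *
        ((α • ((1 : Matrix (Fin 2) (Fin 2) ℂ) ⊗ₖ Em 0 0)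
        + β • ((1 : Matrix (Fin 2) (Fin 2) ℂ) ⊗ₖ Em 1 1)
        + γ • (Zm ⊗ₖ Em 0 1) + δ • (Zm ⊗ₖ Em 1 0)) * Matrix.single x x 1).trace := by
  simp [Matrix.trace, Matrix.diag, Matrix.mul_apply, Matrix.diagonal, Em, Zm,
    Matrix.single, Matrix.one_apply, kroneckerMap_apply, Fintype.sum_prod_type,
    Fin.sum_univ_two, Matrix.add_apply, Matrix.smul_apply, Matrix.of_apply, Prod.ext_iff]
  ring

end Aux

/-- (a) A two-fermionic-mode density matrix that is diagonal in the Fock basis is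
separable with respect to all observables; (b) conversely, a family `ρ(t)` whose
`⟨10|ρ(t)|01⟩` matrix element equals `Jt + O(t²)` with `J ≠ 0` stays trace-norm
distance `≥ Ω(t)` from every diagonal matrix, so it admits no `O(t²)` diagonal
(hence separable) approximation. -/
theorem fermionic_two_mode_separability :
    (∀ ρ : Matrix (Fin 2 × Fin 2) (Fin 2 × Fin 2) ℂ,
      ρ.PosSemidef → ρ.trace = 1 → ρ.IsDiag → SepAllObs ρ)
    ∧ (∀ (J : ℝ), J ≠ 0 →
        ∀ ρ : ℝ → Matrix (Fin 2 × Fin 2) (Fin 2 × Fin 2) ℂ,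
        (∃ K₀ ε₀ : ℝ, 0 < ε₀ ∧ ∀ t : ℝ, 0 < t → t < ε₀ →
          ‖ρ t ((1 : Fin 2), (0 : Fin 2)) ((0 : Fin 2), (1 : Fin 2)) - (J : ℂ) * (t : ℂ)‖
            ≤ K₀ * t ^ 2) →
        ¬ ∃ (K ε : ℝ) (D : ℝ → Matrix (Fin 2 × Fin 2) (Fin 2 × Fin 2) ℂ),
            0 < ε ∧ ∀ t : ℝ, 0 < t → t < ε →
              (D t).IsDiag ∧ traceNorm (ρ t - D t) ≤ K * t ^ 2) := by
  constructor
  · -- part (a)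
    intro ρ hpos htr hdiag
    obtain ⟨d, rfl⟩ : ∃ d, ρ = Matrix.diagonal d := ⟨ρ.diag, hdiag.diagonal_diag.symm⟩
    have hdre : ∀ x, 0 ≤ (d x).re := by
      intro x
      have := psd_diag_re hpos x
      simpa using this
    have hdim : ∀ x, (d x).im = 0 := by
      intro x
      have := psd_diag_im hpos x
      simpa using this
    have hcast : ∀ x, (((d x).re : ℝ) : ℂ) = d x := by
      intro x
      exact Complex.ext (by simp) (by simp [hdim x])
    set e : Fin 2 × Fin 2 ≃ Fin 4 := finProdFinEquiv with he
    refine ⟨4, fun i => (d (e.symm i)).re,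
      fun i => Matrix.single (e.symm i) (e.symm i) 1,
      fun i => Matrix.single (e.symm i) (e.symm i) 1,
      fun i => hdre _, ?_, fun i => ⟨proj_psd _, proj_trace _, proj_psd _, proj_trace _⟩, ?_⟩
    · have := congrArg Complex.re htr
      rw [Matrix.trace_diagonal] at this
      simp only [Complex.re_sum, Complex.one_re] at this
      rw [← this]
      exact Equiv.sum_comp e.symm (fun x => (d x).re)
    · rintro OA ⟨M, rfl⟩ OB ⟨α, β, γ, δ, rfl⟩
      rw [key_identity, ← Equiv.sum_comp e.symm]
      refine Finset.sum_congr rfl (fun i _ => ?_)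
      simp only [hcast]
  · -- part (b)
    rintro J hJ ρ ⟨K₀, ε₀, hε₀, h0⟩ ⟨K, ε, D, hε, h⟩
    set t : ℝ := min (min ε ε₀ / 2) (|J| / (2 * (|K| + |K₀| + 1))) with ht
    have hJ0 : 0 < |J| := abs_pos.mpr hJ
    have hden : 0 < 2 * (|K| + |K₀| + 1) := by positivity
    have ht0 : 0 < t := by
      apply lt_min
      · exact div_pos (lt_min hε hε₀) two_pos
      · exact div_pos hJ0 hden
    have htε : t < ε := by
      calc t ≤ min ε ε₀ / 2 := min_le_left _ _
        _ < min ε ε₀ := by linarith [lt_min hε hε₀]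
        _ ≤ ε := min_le_left _ _
    have htε₀ : t < ε₀ := by
      calc t ≤ min ε ε₀ / 2 := min_le_left _ _
        _ < min ε ε₀ := by linarith [lt_min hε hε₀]
        _ ≤ ε₀ := min_le_right _ _
    obtain ⟨hDdiag, hDnorm⟩ := h t ht0 htε
    have hρ := h0 t ht0 htε₀
    -- entry of D is zero
    have hD0 : D t ((1 : Fin 2), (0 : Fin 2)) ((0 : Fin 2), (1 : Fin 2)) = 0 := by
      apply hDdiag
      simp [Prod.ext_iff]
    -- lower bound on entry
    have hent : |J| * t - K₀ * t ^ 2 ≤ ‖(ρ t - D t) ((1 : Fin 2), (0 : Fin 2)) ((0 : Fin 2), (1 : Fin 2))‖ := by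
      have : (ρ t - D t) ((1 : Fin 2), (0 : Fin 2)) ((0 : Fin 2), (1 : Fin 2))
          = ρ t ((1 : Fin 2), (0 : Fin 2)) ((0 : Fin 2), (1 : Fin 2)) := by
        simp [Matrix.sub_apply, hD0]
      rw [this]
      have h1 : ‖(J : ℂ) * (t : ℂ)‖ = |J| * t := by
        rw [norm_mul]
        simp [Complex.norm_real, abs_of_pos ht0]
      have h2 : ‖(J : ℂ) * (t : ℂ)‖ - ‖ρ t ((1 : Fin 2), (0 : Fin 2)) ((0 : Fin 2), (1 : Fin 2))‖
          ≤ ‖ρ t ((1 : Fin 2), (0 : Fin 2)) ((0 : Fin 2), (1 : Fin 2)) - (J : ℂ) * (t : ℂ)‖ := by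
        rw [norm_sub_rev]
        exact norm_sub_norm_le _ _
      rw [h1] at h2
      linarith
    have hTN := traceNorm_entry_le (ρ t - D t) ((1 : Fin 2), (0 : Fin 2)) ((0 : Fin 2), (1 : Fin 2))
    -- combine: |J| t ≤ (K + K₀) t²
    have hmain : |J| * t ≤ (K + K₀) * t ^ 2 := by nlinarith
    -- but t ≤ |J| / (2(|K|+|K₀|+1)) gives contradiction
    have htb : t ≤ |J| / (2 * (|K| + |K₀| + 1)) := min_le_right _ _
    have h4 : (K + K₀) * t ^ 2 ≤ (|K| + |K₀|) * t ^ 2 := by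
      have : K + K₀ ≤ |K| + |K₀| := add_le_add (le_abs_self K) (le_abs_self K₀)
      nlinarith [sq_nonneg t]
    have h5 : (|K| + |K₀|) * t ≤ (|K| + |K₀|) * (|J| / (2 * (|K| + |K₀| + 1))) := by
      apply mul_le_mul_of_nonneg_left htb (by positivity)
    have h6 : (|K| + |K₀|) * (|J| / (2 * (|K| + |K₀| + 1))) < |J| := by
      have hq : (|J| / (2 * (|K| + |K₀| + 1))) * (2 * (|K| + |K₀| + 1)) = |J| :=
        div_mul_cancel₀ _ (ne_of_gt hden)
      have hqpos : 0 < |J| / (2 * (|K| + |K₀| + 1)) := div_pos hJ0 hden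
      nlinarith [abs_nonneg K, abs_nonneg K₀]
    have h7 : |J| * t ≤ (|K| + |K₀|) * t * t := by nlinarith
    nlinarith [abs_nonneg K, abs_nonneg K₀]
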